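/- arXiv:1804.07662 — 3 statements merged into one kernel-verified Lean document; each statement's English description precedes it below -/
import Mathlib

section
/- For every real number β > 1 and every integer n ≥ 1, the number of β-admissible words of length n satisfies β^n ≤ #Σ_β^n ≤ β^(n+1)/(β−1). -/
open Filter MeasureTheory Set

/-- The β-transformation T_β(x) = βx − ⌊βx⌋. -/
noncomputable def betaT (β : ℝ) : ℝ → ℝ := fun x => β * x - ⌊β * x⌋

/-- The (i+1)-th digit of the β-expansion of x (0-indexed). -/
noncomputable def betaDigit (β x : ℝ) (i : ℕ) : ℤ := ⌊β * (betaT β)^[i] x⌋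

/-- A finite word is β-admissible if some x ∈ [0,1) has β-expansion beginning with it. -/
def IsAdmissibleWord (β : ℝ) (w : List ℤ) : Prop :=
  ∃ x ∈ Set.Ico (0:ℝ) 1, ∀ i (h : i < w.length), w.get ⟨i, h⟩ = betaDigit β x i

/-- An infinite sequence is β-admissible if it is the digit sequence of some x ∈ [0,1). -/
def IsAdmissibleSeq (β : ℝ) (e : ℕ → ℤ) : Prop :=
  ∃ x ∈ Set.Ico (0:ℝ) 1, ∀ i, e i = betaDigit β x i

/-- The basic interval (cylinder) of a word. -/
def cylinder (β : ℝ) (w : List ℤ) : Set ℝ :=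
  {x | x ∈ Set.Ico (0:ℝ) 1 ∧ ∀ i (h : i < w.length), betaDigit β x i = w.get ⟨i, h⟩}

/-- A basic interval is full if its length is β^{-n}. -/
def IsFull (β : ℝ) (w : List ℤ) : Prop :=
  volume (cylinder β w) = ENNReal.ofReal (1 / β ^ w.length)

-- The infinite β-expansion of 1: the periodic modification if the expansion of 1
-- terminates, and the expansion of 1 itself otherwise (0-indexed).
open Classical in
noncomputable def betaStar (β : ℝ) : ℕ → ℤ :=
  if h : ∃ n, betaDigit β 1 n ≠ 0 ∧ ∀ i, n < i → betaDigit β 1 i = 0 then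
    fun i =>
      if i % (h.choose + 1) = h.choose then betaDigit β 1 h.choose - 1
      else betaDigit β 1 (i % (h.choose + 1))
  else betaDigit β 1

/-- Strict lexicographic order on integer sequences. -/
def lexLt (a b : ℕ → ℤ) : Prop := ∃ n, (∀ i, i < n → a i = b i) ∧ a n < b n

/-- l_n(β): the length of the longest run of zeros following the n-th digit
(1-indexed position n) in the infinite β-expansion of 1. -/
noncomputable def zeroRunLen (β : ℝ) (n : ℕ) : ℕ∞ :=
  ⨆ k ∈ {k : ℕ | ∀ j, j < k → betaStar β (n + j) = 0}, (k : ℕ∞)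

/-- A₀: the set of bases β > 1 with bounded zero-runs in the expansion of 1. -/
def A0 : Set ℝ := {β | 1 < β ∧ ∃ C : ℕ, ∀ n, 1 ≤ n → zeroRunLen β n ≤ (C : ℕ∞)}

/-- The waiting time W_n^β(x,y): first k ≥ 1 with T_β^k x in the n-th basic interval of y. -/
noncomputable def waitingTime (β x y : ℝ) (n : ℕ) : ℕ∞ :=
  sInf {k : ℕ∞ | ∃ m : ℕ, k = (m : ℕ∞) ∧ 1 ≤ m ∧
    ∀ i, i < n → betaDigit β ((betaT β)^[m] x) i = betaDigit β y i}

/-- (log W_n^β(x,y)) / n as an extended real, with value ⊤ when W_n = ∞. -/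
noncomputable def waitingRatio (β x y : ℝ) (n : ℕ) : EReal :=
  if h : waitingTime β x y n = ⊤ then ⊤
  else (((Real.log ((waitingTime β x y n).untop h : ℕ)) / n : ℝ) : EReal)





lemma betaT_eq_fract (β x : ℝ) : betaT β x = Int.fract (β * x) := rfl

lemma betaT_mem (β x : ℝ) : betaT β x ∈ Ico (0:ℝ) 1 := by
  rw [betaT_eq_fract]; exact ⟨Int.fract_nonneg _, Int.fract_lt_one _⟩

lemma iter_mem (β : ℝ) {x : ℝ} (hx : x ∈ Ico (0:ℝ) 1) (n : ℕ) :
    (betaT β)^[n] x ∈ Ico (0:ℝ) 1 := by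
  induction n with
  | zero => exact hx
  | succ k ih => rw [Function.iterate_succ_apply']; exact betaT_mem β _

lemma betaDigit_succ (β x : ℝ) (i : ℕ) :
    betaDigit β x (i+1) = betaDigit β (betaT β x) i := by
  simp [betaDigit, Function.iterate_succ_apply]

lemma betaDigit_nonneg {β : ℝ} (hβ : 1 < β) {x : ℝ} (hx : x ∈ Ico (0:ℝ) 1) (i : ℕ) :
    0 ≤ betaDigit β x i := by
  have h := iter_mem β hx i
  exact Int.floor_nonneg.2 (mul_nonneg (by linarith) h.1)

lemma betaDigit_le {β : ℝ} (hβ : 1 < β) {x : ℝ} (hx : x ∈ Ico (0:ℝ) 1) (i : ℕ) :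
    betaDigit β x i ≤ ⌊β⌋ := by
  have h := iter_mem β hx i
  exact Int.floor_le_floor (by nlinarith [h.1, h.2])



lemma _root_.cylinder_nil (β : ℝ) : _root_.cylinder β [] = Ico (0:ℝ) 1 := by
  ext x; simp [_root_.cylinder]

lemma _root_.cylinder_cons (β : ℝ) (d : ℤ) (w : List ℤ) :
    _root_.cylinder β (d :: w) =
      {x | x ∈ Ico (0:ℝ) 1 ∧ ⌊β * x⌋ = d ∧ betaT β x ∈ _root_.cylinder β w} := by
  ext x
  constructor
  · rintro ⟨hx, h⟩
    refine ⟨hx, h 0 (Nat.succ_pos _), betaT_mem β x, fun i hi => ?_⟩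
    have := h (i+1) (Nat.succ_lt_succ hi)
    rwa [betaDigit_succ] at this
  · rintro ⟨hx, hd, _, h⟩
    refine ⟨hx, fun i hi => ?_⟩
    cases i with
    | zero => exact hd
    | succ j => rw [betaDigit_succ]; exact h j (Nat.lt_of_succ_lt_succ hi)

lemma cylStruct {β : ℝ} (hβ : 1 < β) (w : List ℤ) :
    ∃ a b : ℝ, _root_.cylinder β w = Ico a b ∧ 0 ≤ a ∧ b ≤ 1 ∧ b - a ≤ (1/β) ^ w.length ∧
      ∀ x ∈ _root_.cylinder β w, (betaT β)^[w.length] x = β ^ w.length * (x - a) := by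
  have hβ0 : (0:ℝ) < β := by linarith
  induction w with
  | nil =>
    exact ⟨0, 1, _root_.cylinder_nil β, le_refl _, le_refl _, by norm_num, by
      intro x hx; simp⟩
  | cons d w ih =>
    obtain ⟨a, b, hcyl, ha, hb, hlen, hT⟩ := ih
    refine ⟨max 0 ((d + a)/β), min 1 ((d + b)/β), ?_, le_max_left _ _, min_le_left _ _, ?_, ?_⟩
    · ext x
      rw [_root_.cylinder_cons, hcyl]
      simp only [mem_setOf_eq, mem_Ico, betaT, max_le_iff, lt_min_iff, le_max_iff]
      constructor
      · rintro ⟨⟨h0, h1⟩, hd, ⟨hab, hab'⟩⟩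
        subst hd
        constructor
        · constructor
          · exact h0
          · rw [div_le_iff₀ hβ0]; linarith
        · exact ⟨h1, by rw [lt_div_iff₀ hβ0]; linarith⟩
      · rintro ⟨⟨h0, hax⟩, h1, hbx⟩
        rw [div_le_iff₀ hβ0] at hax
        rw [lt_div_iff₀ hβ0] at hbx
        have hfl : ⌊β * x⌋ = d := by
          rw [Int.floor_eq_iff]
          push_cast
          constructor <;> nlinarith
        refine ⟨⟨h0, h1⟩, hfl, ?_, ?_⟩ <;> rw [hfl] <;> push_cast <;> nlinarith
    · -- length bound
      have : min 1 ((↑d + b)/β) - max 0 ((↑d + a)/β) ≤ (↑d + b)/β - (↑d + a)/β := by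
        gcongr
        · exact min_le_right _ _
        · exact le_max_right _ _
      calc min 1 ((↑d + b)/β) - max 0 ((↑d + a)/β) ≤ (↑d + b)/β - (↑d + a)/β := this
        _ = (b - a) / β := by ring
        _ ≤ (1/β) ^ w.length / β := by gcongr
        _ = (1/β) ^ (d :: w).length := by
            rw [List.length_cons, pow_succ]; field_simp
    · -- iterate formula
      intro x hx
      have hx' := hx
      rw [_root_.cylinder_cons] at hx'
      obtain ⟨hx01, hd, hTx⟩ := hx'
      have hd0 : (0:ℤ) ≤ d := by
        rw [← hd]; exact Int.floor_nonneg.2 (mul_nonneg (by linarith) hx01.1)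
      have hmax : max 0 ((↑d + a)/β) = (↑d + a)/β := by
        apply max_eq_right
        apply div_nonneg _ (le_of_lt hβ0)
        have : (0:ℝ) ≤ (d:ℝ) := by exact_mod_cast hd0
        linarith
      rw [List.length_cons, Function.iterate_succ_apply, hT _ hTx, hmax]
      have : betaT β x = β * x - d := by rw [betaT, hd]
      rw [this, pow_succ]
      field_simp
      ring



lemma finite_lists (s : Set ℤ) (hs : s.Finite) (n : ℕ) :
    {w : List ℤ | w.length = n ∧ ∀ d ∈ w, d ∈ s}.Finite := by
  induction n with
  | zero =>
    apply Set.Finite.subset (Set.finite_singleton ([] : List ℤ))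
    rintro w ⟨hw, -⟩
    simp [List.length_eq_zero_iff.mp hw]
  | succ k ih =>
    apply Set.Finite.subset (Set.Finite.image2 List.cons hs ih)
    rintro w ⟨hw, hmem⟩
    cases w with
    | nil => simp at hw
    | cons d t =>
      exact ⟨d, hmem d (by simp), t, ⟨by simpa using hw, fun e he => hmem e (by simp [he])⟩, rfl⟩

lemma adm_finite {β : ℝ} (hβ : 1 < β) (n : ℕ) :
    {w : List ℤ | w.length = n ∧ IsAdmissibleWord β w}.Finite := by
  apply Set.Finite.subset (finite_lists (Set.Icc 0 ⌊β⌋) (Set.finite_Icc _ _) n)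
  rintro w ⟨hlen, x, hx, hdig⟩
  refine ⟨hlen, fun d hd => ?_⟩
  obtain ⟨i, hi⟩ := List.get_of_mem hd
  obtain ⟨j, hj⟩ := i
  rw [← hi, hdig j hj]
  exact ⟨betaDigit_nonneg hβ hx j, betaDigit_le hβ hx j⟩

lemma mem_cylinder_of_adm {β : ℝ} {w : List ℤ} {x : ℝ} (hx : x ∈ Ico (0:ℝ) 1)
    (h : ∀ i (h : i < w.length), w.get ⟨i, h⟩ = betaDigit β x i) : x ∈ _root_.cylinder β w :=
  ⟨hx, fun i hi => (h i hi).symm⟩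

lemma cover {β : ℝ} (n : ℕ) : Ico (0:ℝ) 1 ⊆
    ⋃ w ∈ {w : List ℤ | w.length = n ∧ IsAdmissibleWord β w}, _root_.cylinder β w := by
  intro x hx
  have h1 : (List.ofFn (fun i : Fin n => betaDigit β x i)) ∈
      {w : List ℤ | w.length = n ∧ IsAdmissibleWord β w} :=
    ⟨by simp, x, hx, fun i hi => by simp⟩
  exact Set.mem_biUnion h1 ⟨hx, fun i hi => by simp⟩

lemma pairwise_disj {β : ℝ} (n : ℕ) :
    {w : List ℤ | w.length = n ∧ IsAdmissibleWord β w}.PairwiseDisjoint (_root_.cylinder β) := by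
  rintro w ⟨hw, -⟩ w' ⟨hw', -⟩ hne
  rw [Function.onFun, Set.disjoint_left]
  rintro x ⟨-, hd⟩ ⟨-, hd'⟩
  apply hne
  apply List.ext_get (by rw [hw, hw'])
  intro i h1 h2
  rw [← hd i h1, ← hd' i h2]

open MeasureTheory in
lemma renyi_lower {β : ℝ} (hβ : 1 < β) (n : ℕ) :
    β ^ n ≤ (({w : List ℤ | w.length = n ∧ IsAdmissibleWord β w}).ncard : ℝ) := by
  have hβ0 : (0:ℝ) < β := by linarith
  set S := {w : List ℤ | w.length = n ∧ IsAdmissibleWord β w} with hS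
  have hfin := adm_finite hβ n
  have hvol : ∀ w ∈ hfin.toFinset, volume (_root_.cylinder β w) ≤ ENNReal.ofReal ((1/β)^n) := by
    intro w hw
    rw [Set.Finite.mem_toFinset] at hw
    obtain ⟨a, b, hcyl, -, -, hlen, -⟩ := cylStruct hβ w
    rw [hcyl, Real.volume_Ico]
    exact ENNReal.ofReal_le_ofReal (by rw [← hw.1]; exact hlen)
  have h1 : (1:ENNReal) ≤ hfin.toFinset.card * ENNReal.ofReal ((1/β)^n) := by
    calc (1:ENNReal) = volume (Ico (0:ℝ) 1) := by simp
      _ ≤ volume (⋃ w ∈ hfin.toFinset, _root_.cylinder β w) := by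
          apply measure_mono
          intro x hx
          have := cover (β := β) n hx
          simp only [Set.mem_iUnion] at this ⊢
          obtain ⟨w, hw, hw2⟩ := this
          exact ⟨w, ⟨Set.Finite.mem_toFinset hfin |>.mpr hw, hw2⟩⟩
      _ ≤ ∑ w ∈ hfin.toFinset, volume (_root_.cylinder β w) := measure_biUnion_finset_le _ _
      _ ≤ ∑ _w ∈ hfin.toFinset, ENNReal.ofReal ((1/β)^n) := Finset.sum_le_sum hvol
      _ = hfin.toFinset.card * ENNReal.ofReal ((1/β)^n) := by
          rw [Finset.sum_const, nsmul_eq_mul]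
  have h2 : (1:ℝ) ≤ hfin.toFinset.card * (1/β)^n := by
    rw [← ENNReal.one_le_ofReal (p := hfin.toFinset.card * (1/β)^n),
      ENNReal.ofReal_mul (by positivity)]
    simpa using h1
  have hcard : (S.ncard : ℝ) = hfin.toFinset.card := by
    rw [Set.ncard_eq_toFinset_card S hfin]
  rw [hcard]
  have hpow : (0:ℝ) < β ^ n := by positivity
  rw [div_pow, one_pow] at h2
  rw [mul_one_div, le_div_iff₀ hpow, one_mul] at h2
  linarith

open MeasureTheory in
lemma renyi_step {β : ℝ} (hβ : 1 < β) (n : ℕ) :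
    (({w : List ℤ | w.length = n + 1 ∧ IsAdmissibleWord β w}).ncard : ℝ) ≤
      β ^ (n+1) + (({w : List ℤ | w.length = n ∧ IsAdmissibleWord β w}).ncard : ℝ) := by
  classical
  have hβ0 : (0:ℝ) < β := by linarith
  have hfinN := adm_finite hβ n
  have hfinG := adm_finite hβ (n+1)
  set F := hfinN.toFinset with hF
  set G := hfinG.toFinset with hG
  choose A B hcyl hA hB hlen hT using fun w => cylStruct hβ w
  -- dropLast maps G into F
  have hmap : ∀ w' ∈ G, w'.dropLast ∈ F := by
    intro w' hw'
    rw [hG, Set.Finite.mem_toFinset] at hw'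
    obtain ⟨hwlen, x, hx, hdig⟩ := hw'
    rw [hF, Set.Finite.mem_toFinset]
    have hlen' : w'.dropLast.length = n := by simp [hwlen]
    refine ⟨hlen', x, hx, fun i hi => ?_⟩
    have hi' : i < w'.length := by
      have := hi; rw [hlen'] at this; omega
    have : w'.dropLast.get ⟨i, hi⟩ = w'.get ⟨i, hi'⟩ := by
      simp [List.get_eq_getElem, List.getElem_dropLast]
    exact this.trans (hdig i hi')
  have hGF : G.card = ∑ w ∈ F, (G.filter (fun w' => w'.dropLast = w)).card :=
    Finset.card_eq_sum_card_fiberwise hmap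
  -- membership facts about F
  have hmemF : ∀ w ∈ F, w.length = n ∧ IsAdmissibleWord β w := by
    intro w hw; rwa [hF, Set.Finite.mem_toFinset] at hw
  have hpos : ∀ w ∈ F, 0 < B w - A w := by
    intro w hw
    obtain ⟨-, x, hx, hdig⟩ := hmemF w hw
    have hxc : x ∈ _root_.cylinder β w := mem_cylinder_of_adm hx hdig
    rw [hcyl w] at hxc
    obtain ⟨h1, h2⟩ := hxc
    linarith
  -- fiber bound
  have hfiber : ∀ w ∈ F, ((G.filter (fun w' => w'.dropLast = w)).card : ℝ) ≤
      β ^ (n+1) * (B w - A w) + 1 := by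
    intro w hw
    obtain ⟨hwlen, -⟩ := hmemF w hw
    set L : ℝ := β ^ (n+1) * (B w - A w) with hL
    have hL0 : 0 < L := by
      have := hpos w hw; positivity
    have hinto : ∀ w' ∈ G.filter (fun w' => w'.dropLast = w),
        w'.getD n 0 ∈ Finset.Ico (0:ℤ) ⌈L⌉ := by
      intro w' hw'
      rw [Finset.mem_filter] at hw'
      obtain ⟨hw'G, hdrop⟩ := hw'
      rw [hG, Set.Finite.mem_toFinset] at hw'G
      obtain ⟨hw'len, x, hx, hdig⟩ := hw'G
      have hnlt : n < w'.length := by omega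
      have hgd : w'.getD n 0 = betaDigit β x n := by
        have h := hdig n hnlt
        simp only [List.get_eq_getElem] at h
        rw [List.getD_eq_getElem _ _ hnlt]
        exact h
      have hxc : x ∈ _root_.cylinder β w := by
        refine mem_cylinder_of_adm hx (fun i hi => ?_)
        have hi' : i < w'.length := by rw [hwlen] at hi; omega
        have hdl : i < w'.dropLast.length := by simp; omega
        have : w.get ⟨i, hi⟩ = w'.get ⟨i, hi'⟩ := by
          have e1 : w.get ⟨i, hi⟩ = w[i] := rfl
          have e2 : w[i] = w'.dropLast[i]'(by rw [hdrop]; exact hi) :=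
            List.getElem_of_eq hdrop.symm hi
          have e3 : w'.dropLast[i]'(by rw [hdrop]; exact hi) = w'[i] :=
            List.getElem_dropLast _
          rw [e1, e2, e3]; rfl
        exact this.trans (hdig i hi')
      have hxI : x ∈ Ico (A w) (B w) := by rwa [hcyl w] at hxc
      have hTn : (betaT β)^[n] x = β ^ n * (x - A w) := by
        have := hT w x hxc; rwa [hwlen] at this
      have hT01 : (betaT β)^[n] x ∈ Ico (0:ℝ) 1 := iter_mem β hx n
      have hdig' : betaDigit β x n = ⌊β * (betaT β)^[n] x⌋ := rfl
      rw [hgd, hdig']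
      rw [Finset.mem_Ico]
      constructor
      · exact Int.floor_nonneg.2 (mul_nonneg (le_of_lt hβ0) hT01.1)
      · rw [Int.lt_ceil]
        calc (⌊β * (betaT β)^[n] x⌋ : ℝ) ≤ β * (betaT β)^[n] x := Int.floor_le _
          _ = β * (β ^ n * (x - A w)) := by rw [hTn]
          _ < β * (β ^ n * (B w - A w)) := by
              have : x - A w < B w - A w := by have := hxI.2; linarith
              have hb : (0:ℝ) < β * β ^ n := by positivity
              nlinarith [this, hb]
          _ = L := by rw [hL, pow_succ]; ring
    have hinj : Set.InjOn (fun w' : List ℤ => w'.getD n 0)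
        (G.filter (fun w' => w'.dropLast = w)) := by
      intro w₁ h₁ w₂ h₂ heq
      simp only [Finset.coe_filter, Set.mem_setOf_eq] at h₁ h₂
      obtain ⟨h₁G, h₁d⟩ := h₁
      obtain ⟨h₂G, h₂d⟩ := h₂
      rw [hG, Set.Finite.mem_toFinset] at h₁G h₂G
      have l₁ : w₁.length = n + 1 := h₁G.1
      have l₂ : w₂.length = n + 1 := h₂G.1
      apply List.ext_getElem (by omega)
      intro i hi1 hi2
      rcases Nat.lt_or_ge i n with hlt | hge
      · have d1 : i < w₁.dropLast.length := by simp; omega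
        have d2 : i < w₂.dropLast.length := by simp; omega
        have e1 : w₁[i] = w₁.dropLast[i]'d1 := (List.getElem_dropLast _).symm
        have e2 : w₂[i] = w₂.dropLast[i]'d2 := (List.getElem_dropLast _).symm
        have e3 : w₁.dropLast[i]'d1 = w₂.dropLast[i]'(by rw [h₁d] at d1; rwa [h₂d]) :=
          List.getElem_of_eq (h₁d.trans h₂d.symm) d1
        rw [e1, e2]; rw [e3]
      · have : i = n := by omega
        subst this
        have g1 : w₁.getD i 0 = w₁[i] := List.getD_eq_getElem _ _ hi1
        have g2 : w₂.getD i 0 = w₂[i] := List.getD_eq_getElem _ _ hi2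
        rw [← g1, ← g2]
        exact heq
    have hcard := Finset.card_le_card_of_injOn _ hinto hinj
    have hIcoCard : (Finset.Ico (0:ℤ) ⌈L⌉).card = ⌈L⌉.toNat := by
      rw [Int.card_Ico]; simp
    have hceil : ((⌈L⌉.toNat : ℤ) : ℝ) ≤ L + 1 := by
      rw [Int.toNat_of_nonneg (by positivity)]
      have := Int.ceil_lt_add_one L
      linarith
    calc ((G.filter (fun w' => w'.dropLast = w)).card : ℝ)
        ≤ ((Finset.Ico (0:ℤ) ⌈L⌉).card : ℝ) := by exact_mod_cast hcard
      _ = ((⌈L⌉.toNat : ℤ) : ℝ) := by rw [hIcoCard]; push_cast; ring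
      _ ≤ L + 1 := hceil
  -- total volume bound
  have hsum : ∑ w ∈ F, (B w - A w) ≤ 1 := by
    rw [← ENNReal.ofReal_le_one,
      ENNReal.ofReal_sum_of_nonneg (fun w hw => le_of_lt (hpos w hw))]
    have : ∀ w ∈ F, ENNReal.ofReal (B w - A w) = volume (_root_.cylinder β w) := by
      intro w hw
      rw [hcyl w, Real.volume_Ico]
    rw [Finset.sum_congr rfl this]
    have hdisj : Set.PairwiseDisjoint (↑F) (_root_.cylinder β) := by
      apply Set.PairwiseDisjoint.subset (pairwise_disj (β := β) n)
      intro w hw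
      exact hmemF w hw
    have hmeas : ∀ w ∈ F, MeasurableSet (_root_.cylinder β w) := by
      intro w hw
      rw [hcyl w]
      exact measurableSet_Ico
    rw [← measure_biUnion_finset hdisj hmeas]
    calc volume (⋃ w ∈ F, _root_.cylinder β w) ≤ volume (Ico (0:ℝ) 1) := by
          apply measure_mono
          intro x hx
          simp only [Set.mem_iUnion] at hx
          obtain ⟨w, -, hw2⟩ := hx
          exact hw2.1
      _ = 1 := by simp
  -- assemble
  have hGn : (({w : List ℤ | w.length = n + 1 ∧ IsAdmissibleWord β w}).ncard : ℝ) = G.card := by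
    rw [Set.ncard_eq_toFinset_card _ hfinG]
  have hFn : (({w : List ℤ | w.length = n ∧ IsAdmissibleWord β w}).ncard : ℝ) = F.card := by
    rw [Set.ncard_eq_toFinset_card _ hfinN]
  rw [hGn, hFn]
  calc (G.card : ℝ) = ∑ w ∈ F, ((G.filter (fun w' => w'.dropLast = w)).card : ℝ) := by
        rw [hGF]; push_cast; ring
    _ ≤ ∑ w ∈ F, (β ^ (n+1) * (B w - A w) + 1) := Finset.sum_le_sum hfiber
    _ = β ^ (n+1) * (∑ w ∈ F, (B w - A w)) + F.card := by
        rw [Finset.sum_add_distrib, ← Finset.mul_sum]; simp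
    _ ≤ β ^ (n+1) * 1 + F.card := by
        have : (0:ℝ) ≤ β ^ (n+1) := by positivity
        nlinarith [hsum]
    _ = β ^ (n+1) + F.card := by ring

lemma adm_nil (β : ℝ) : IsAdmissibleWord β [] :=
  ⟨0, by norm_num, fun i hi => by simp at hi⟩

lemma renyi_upper_aux {β : ℝ} (hβ : 1 < β) (m : ℕ) :
    (({w : List ℤ | w.length = m ∧ IsAdmissibleWord β w}).ncard : ℝ) ≤
      ∑ k ∈ Finset.range (m+1), β ^ k := by
  induction m with
  | zero =>
    have : {w : List ℤ | w.length = 0 ∧ IsAdmissibleWord β w} = {[]} := by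
      ext w
      simp only [Set.mem_setOf_eq, Set.mem_singleton_iff, List.length_eq_zero_iff]
      constructor
      · rintro ⟨h, -⟩; exact h
      · rintro rfl; exact ⟨rfl, adm_nil β⟩
    rw [this]
    simp
  | succ k ih =>
    calc (({w : List ℤ | w.length = k + 1 ∧ IsAdmissibleWord β w}).ncard : ℝ)
        ≤ β ^ (k+1) + ({w : List ℤ | w.length = k ∧ IsAdmissibleWord β w}).ncard :=
          renyi_step hβ k
      _ ≤ β ^ (k+1) + ∑ j ∈ Finset.range (k+1), β ^ j := by linarith
      _ = ∑ j ∈ Finset.range (k+2), β ^ j := by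
          rw [Finset.sum_range_succ (n := k+1)]; ring


/-- Rényi's estimate: β^n ≤ #Σ_β^n ≤ β^{n+1}/(β−1). -/
theorem renyi_card_admissible (β : ℝ) (hβ : 1 < β) (n : ℕ) (hn : 1 ≤ n) :
    β ^ n ≤ ({w : List ℤ | w.length = n ∧ IsAdmissibleWord β w}.ncard : ℝ) ∧
    ({w : List ℤ | w.length = n ∧ IsAdmissibleWord β w}.ncard : ℝ) ≤ β ^ (n + 1) / (β - 1) := by
  -- main proof

  refine ⟨renyi_lower hβ n, ?_⟩
  have h1 := renyi_upper_aux hβ n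
  have hβ1 : β - 1 > 0 := by linarith
  have hgeom : ∑ k ∈ Finset.range (n+1), β ^ k = (β ^ (n+1) - 1) / (β - 1) := by
    rw [geom_sum_eq (by linarith : β ≠ 1)]
  rw [hgeom] at h1
  calc ({w : List ℤ | w.length = n ∧ IsAdmissibleWord β w}.ncard : ℝ)
      ≤ (β ^ (n+1) - 1) / (β - 1) := h1
    _ ≤ β ^ (n+1) / (β - 1) := by
        gcongr
        linarith
end

section
/- For a β-admissible word (ε_1,…,ε_n), the following are equivalent: (1) the basic interval I_n(ε_1,…,ε_n) has length exactly β^{−n}; (2) T_β^n maps I_n(ε_1,…,ε_n) onto [0,1); (3) for every β-admissible word (η_1,…,η_m), the concatenation (ε_1,…,ε_n,η_1,…,η_m) is β-admissible. -/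
open Filter MeasureTheory Set

lemma betaT_mem_Ico (β x : ℝ) : betaT β x ∈ Set.Ico (0:ℝ) 1 := by
  have h : betaT β x = Int.fract (β * x) := rfl
  rw [h]
  exact ⟨Int.fract_nonneg _, Int.fract_lt_one _⟩

lemma betaT_iter_mem (β x : ℝ) (hx : x ∈ Set.Ico (0:ℝ) 1) (n : ℕ) :
    (betaT β)^[n] x ∈ Set.Ico (0:ℝ) 1 := by
  induction n with
  | zero => exact hx
  | succ n ih => rw [Function.iterate_succ_apply']; exact betaT_mem_Ico _ _

lemma betaDigit_add (β x : ℝ) (n i : ℕ) :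
    betaDigit β x (n + i) = betaDigit β ((betaT β)^[n] x) i := by
  unfold betaDigit
  rw [add_comm, Function.iterate_add_apply]

lemma mem_cylinder_cons {β : ℝ} {d : ℤ} {w : List ℤ} {x : ℝ} :
    x ∈ cylinder β (d :: w) ↔
      x ∈ Set.Ico (0:ℝ) 1 ∧ ⌊β * x⌋ = d ∧ betaT β x ∈ cylinder β w := by
  constructor
  · rintro ⟨hx, h⟩
    refine ⟨hx, ?_, betaT_mem_Ico β x, fun i hi => ?_⟩
    · have := h 0 (by simp)
      simpa [betaDigit] using this
    · have := h (i + 1) (by simpa using Nat.succ_lt_succ hi)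
      simpa [betaDigit, Function.iterate_succ_apply] using this
  · rintro ⟨hx, hd, hTx⟩
    refine ⟨hx, fun i hi => ?_⟩
    cases i with
    | zero => simpa [betaDigit] using hd
    | succ j =>
      have hj : j < w.length := by simpa using hi
      have := hTx.2 j hj
      simpa [betaDigit, Function.iterate_succ_apply] using this

noncomputable def Cval (β : ℝ) : List ℤ → ℝ
  | [] => 0
  | d :: t => (d : ℝ) * β ^ t.length + Cval β t

lemma T_iter_eq_of_mem {β : ℝ} {w : List ℤ} {x : ℝ} (hx : x ∈ cylinder β w) :
    (betaT β)^[w.length] x = β ^ w.length * x - Cval β w := by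
  induction w generalizing x with
  | nil => simp [Cval]
  | cons d t ih =>
    rw [mem_cylinder_cons] at hx
    obtain ⟨hx1, hd, ht⟩ := hx
    have h1 : (betaT β)^[(d :: t).length] x = (betaT β)^[t.length] (betaT β x) := by
      rw [List.length_cons, Function.iterate_succ_apply]
    have hTx : betaT β x = β * x - (d : ℝ) := by rw [betaT]; rw [hd]
    rw [h1, ih ht, hTx]
    simp only [Cval, List.length_cons]
    ring

lemma construct {β : ℝ} (hβ : 1 < β) (w : List ℤ) :
    ∀ y ∈ cylinder β w, ∀ s, 0 ≤ s → s ≤ (betaT β)^[w.length] y →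
      (Cval β w + s) / β ^ w.length ∈ cylinder β w := by
  have hβ0 : (0:ℝ) < β := lt_trans one_pos hβ
  induction w with
  | nil =>
    intro y hy s hs0 hs1
    simp only [List.length_nil, pow_zero, Cval, zero_add, div_one]
    simp only [List.length_nil] at hs1
    refine ⟨⟨hs0, lt_of_le_of_lt hs1 hy.1.2⟩, fun i hi => by simp at hi⟩
  | cons d t ih =>
    intro y hy s hs0 hs1
    rw [mem_cylinder_cons] at hy
    obtain ⟨hy1, hd, hty⟩ := hy
    have hs1' : s ≤ (betaT β)^[t.length] (betaT β y) := by
      rw [← Function.iterate_succ_apply]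
      simpa using hs1
    have hx'cyl := ih (betaT β y) hty s hs0 hs1'
    set x' := (Cval β t + s) / β ^ t.length with hx'def
    have hpow : (0:ℝ) < β ^ t.length := pow_pos hβ0 t.length
    have hTyeq := T_iter_eq_of_mem hty
    have hx'le : x' ≤ betaT β y := by
      rw [hx'def, div_le_iff₀ hpow]
      nlinarith [hs1', hTyeq]
    have hx'0 := hx'cyl.1.1
    have hx'1 := hx'cyl.1.2
    have hd0 : (0:ℝ) ≤ (d:ℝ) := by
      have h0 : (0:ℤ) ≤ ⌊β * y⌋ := Int.floor_nonneg.2 (mul_nonneg hβ0.le hy1.1)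
      rw [hd] at h0
      exact_mod_cast h0
    set x := ((d : ℝ) + x') / β with hxdef
    have hβx : β * x = (d : ℝ) + x' := by
      rw [hxdef]; field_simp
    have hfloor : ⌊β * x⌋ = d := by
      rw [hβx, Int.floor_intCast_add]
      have : ⌊x'⌋ = 0 := Int.floor_eq_zero_iff.2 ⟨hx'0, hx'1⟩
      omega
    have hTx : betaT β x = x' := by
      rw [betaT]; rw [hfloor, hβx]; ring
    have hxIco : x ∈ Set.Ico (0:ℝ) 1 := by
      constructor
      · rw [hxdef]; positivity
      · rw [hxdef, div_lt_one hβ0]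
        have hTyv : betaT β y = β * y - (d:ℝ) := by rw [betaT, hd]
        have : β * y < β := by nlinarith [hy1.2]
        linarith [hx'le, hTyv ▸ hx'le]
    have hmem : x ∈ cylinder β (d :: t) :=
      mem_cylinder_cons.2 ⟨hxIco, hfloor, hTx ▸ hx'cyl⟩
    have hxeq : (Cval β (d :: t) + s) / β ^ (d :: t).length = x := by
      rw [hxdef, hx'def]
      simp only [Cval, List.length_cons]
      rw [pow_succ]
      field_simp
      ring
    rw [hxeq]
    exact hmem

lemma myImageAffineIco {b : ℝ} (hb : 0 < b) (C u : ℝ) :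
    (fun s => (C + s) / b) '' Set.Ico 0 u = Set.Ico (C / b) ((C + u) / b) := by
  ext x
  simp only [Set.mem_image, Set.mem_Ico]
  constructor
  · rintro ⟨s, ⟨h0, h1⟩, rfl⟩
    constructor
    · gcongr; linarith
    · gcongr
  · rintro ⟨h0, h1⟩
    refine ⟨b * x - C, ⟨?_, ?_⟩, ?_⟩
    · rw [div_le_iff₀ hb] at h0; linarith
    · rw [lt_div_iff₀ hb] at h1; nlinarith
    · have h : C + (b * x - C) = b * x := by ring
      rw [h, mul_comm, mul_div_assoc, div_self hb.ne', mul_one]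

lemma myImageAffineIcc {b : ℝ} (hb : 0 < b) (C u : ℝ) :
    (fun s => (C + s) / b) '' Set.Icc 0 u = Set.Icc (C / b) ((C + u) / b) := by
  ext x
  simp only [Set.mem_image, Set.mem_Icc]
  constructor
  · rintro ⟨s, ⟨h0, h1⟩, rfl⟩
    constructor
    · gcongr; linarith
    · gcongr
  · rintro ⟨h0, h1⟩
    refine ⟨b * x - C, ⟨?_, ?_⟩, ?_⟩
    · rw [div_le_iff₀ hb] at h0; linarith
    · rw [le_div_iff₀ hb] at h1; nlinarith
    · have h : C + (b * x - C) = b * x := by ring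
      rw [h, mul_comm, mul_div_assoc, div_self hb.ne', mul_one]

/-- Characterization of full basic intervals: full ↔ T_β^n maps the cylinder onto [0,1)
↔ every admissible word can be concatenated behind. -/
theorem full_tfae (β : ℝ) (hβ : 1 < β) (w : List ℤ) (hw : IsAdmissibleWord β w) :
    (IsFull β w ↔ (betaT β)^[w.length] '' cylinder β w = Set.Ico (0:ℝ) 1) ∧
    (IsFull β w ↔ ∀ η : List ℤ, IsAdmissibleWord β η → IsAdmissibleWord β (w ++ η)) := by
  have hβ0 : (0:ℝ) < β := lt_trans one_pos hβ
  set n := w.length with hn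
  have hβn : (0:ℝ) < β ^ n := pow_pos hβ0 n
  set S := (betaT β)^[n] '' cylinder β w with hS
  set C := Cval β w with hC
  have hSsub : S ⊆ Set.Ico (0:ℝ) 1 := by
    rintro _ ⟨x, hx, rfl⟩
    exact betaT_iter_mem β x hx.1 n
  have hdown : ∀ t ∈ S, ∀ s, 0 ≤ s → s ≤ t → s ∈ S := by
    rintro _ ⟨y, hy, rfl⟩ s hs0 hs1
    have hmem := construct hβ w y hy s hs0 hs1
    refine ⟨(C + s) / β ^ n, hmem, ?_⟩
    rw [T_iter_eq_of_mem hmem]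
    rw [← hn, ← hC]
    field_simp
    ring
  have hne : S.Nonempty := by
    obtain ⟨x, hx, hxd⟩ := hw
    exact ⟨_, ⟨x, ⟨hx, fun i h => (hxd i h).symm⟩, rfl⟩⟩
  have hbdd : BddAbove S := ⟨1, fun s hs => (hSsub hs).2.le⟩
  set u := sSup S with hu
  have hu1 : u ≤ 1 := csSup_le hne fun s hs => (hSsub hs).2.le
  have hu0 : 0 ≤ u := by
    obtain ⟨s₀, hs₀⟩ := hne
    exact le_trans (hSsub hs₀).1 (le_csSup hbdd hs₀)
  have hIcoSub : Set.Ico 0 u ⊆ S := by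
    rintro s ⟨hs0, hsu⟩
    obtain ⟨t, htS, hst⟩ := exists_lt_of_lt_csSup hne hsu
    exact hdown t htS s hs0 hst.le
  have hSubIcc : S ⊆ Set.Icc 0 u := fun s hs => ⟨(hSsub hs).1, le_csSup hbdd hs⟩
  have hSico : u ∉ S → S = Set.Ico 0 u := by
    intro hmem
    refine Set.Subset.antisymm (fun s hs => ⟨(hSsub hs).1, ?_⟩) hIcoSub
    exact lt_of_le_of_ne (le_csSup hbdd hs) (fun h => hmem (h ▸ hs))
  have hcylimg : cylinder β w = (fun s => (C + s) / β ^ n) '' S := by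
    ext x
    constructor
    · intro hx
      refine ⟨(betaT β)^[n] x, ⟨x, hx, rfl⟩, ?_⟩
      rw [T_iter_eq_of_mem hx, ← hn, ← hC]
      field_simp
      ring
    · rintro ⟨_, ⟨y, hy, rfl⟩, rfl⟩
      have h1 := T_iter_eq_of_mem hy
      rw [← hn, ← hC] at h1
      have h2 : (C + (betaT β)^[n] y) / β ^ n = y := by
        rw [h1]; field_simp; ring
      show (C + (betaT β)^[n] y) / β ^ n ∈ cylinder β w
      rw [h2]; exact hy
  have hvol : volume (cylinder β w) = ENNReal.ofReal (u / β ^ n) := by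
    by_cases hmem : u ∈ S
    · have hSeq : S = Set.Icc 0 u := by
        refine Set.Subset.antisymm hSubIcc (fun s hs => ?_)
        rcases eq_or_lt_of_le hs.2 with h | h
        · rw [h]; exact hmem
        · exact hIcoSub ⟨hs.1, h⟩
      rw [hcylimg, hSeq, myImageAffineIcc hβn, Real.volume_Icc]
      congr 1; ring
    · rw [hcylimg, hSico hmem, myImageAffineIco hβn, Real.volume_Ico]
      congr 1; ring
  have hfull_iff : IsFull β w ↔ u = 1 := by
    unfold IsFull
    rw [hvol, ← hn]
    rw [ENNReal.ofReal_eq_ofReal_iff (div_nonneg hu0 hβn.le)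
      (div_nonneg zero_le_one hβn.le)]
    rw [div_eq_div_iff hβn.ne' hβn.ne']
    constructor
    · intro h; exact mul_right_cancel₀ hβn.ne' (by linarith)
    · intro h; rw [h]
  have hA : IsFull β w ↔ S = Set.Ico (0:ℝ) 1 := by
    rw [hfull_iff]
    constructor
    · intro h1
      have hmem : u ∉ S := fun hm => absurd (hSsub hm).2 (by rw [h1]; exact lt_irrefl 1)
      rw [hSico hmem, h1]
    · intro hSeq
      refine le_antisymm hu1 ?_
      by_contra hlt
      push_neg at hlt
      have hm : (u + 1) / 2 ∈ S := hSeq ▸ ⟨by linarith, by linarith⟩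
      have := le_csSup hbdd hm
      linarith
  have hB : S = Set.Ico (0:ℝ) 1 → ∀ η, IsAdmissibleWord β η → IsAdmissibleWord β (w ++ η) := by
    rintro hSeq η ⟨y, hy, hyd⟩
    have hyS : y ∈ S := hSeq ▸ hy
    obtain ⟨x, hx, hTx⟩ := hyS
    refine ⟨x, hx.1, fun i hi => ?_⟩
    have hilen : i < n + η.length := by simpa using hi
    simp only [List.get_eq_getElem]
    by_cases hin : i < n
    · rw [List.getElem_append_left hin]
      have := hx.2 i hin
      simp only [List.get_eq_getElem] at this
      exact this.symm
    · push_neg at hin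
      rw [List.getElem_append_right hin]
      have hj : i - n < η.length := by omega
      have h1 := hyd (i - n) hj
      simp only [List.get_eq_getElem] at h1
      rw [h1, ← hTx, ← betaDigit_add]
      congr 1
      omega
  have hB' : (∀ η, IsAdmissibleWord β η → IsAdmissibleWord β (w ++ η)) → u = 1 := by
    intro hcat
    refine le_antisymm hu1 ?_
    by_contra hlt
    push_neg at hlt
    set t := (u + 1) / 2 with htdef
    have ht0 : 0 ≤ t := by rw [htdef]; linarith
    have ht1 : t < 1 := by rw [htdef]; linarith
    have htu : u < t := by rw [htdef]; linarith
    obtain ⟨m, hm⟩ := exists_pow_lt_of_lt_one (show (0:ℝ) < t - u by linarith)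
      (show 1 / β < 1 by rw [div_lt_one hβ0]; exact hβ)
    set η := List.ofFn (fun j : Fin m => betaDigit β t j) with hη
    have hηlen : η.length = m := by rw [hη]; exact List.length_ofFn
    have hηadm : IsAdmissibleWord β η :=
      ⟨t, ⟨ht0, ht1⟩, fun i h => by simp [hη, List.get_ofFn]⟩
    obtain ⟨x, hx, hxd⟩ := hcat η hηadm
    have hlen : (w ++ η).length = n + m := by simp [hηlen, ← hn]
    have hxcyl : x ∈ cylinder β w := by
      refine ⟨hx, fun i hin => ?_⟩
      have hi' : i < (w ++ η).length := by rw [hlen]; omega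
      have h1 := hxd i hi'
      simp only [List.get_eq_getElem] at h1 ⊢
      rw [← h1, List.getElem_append_left hin]
    set s := (betaT β)^[n] x with hsdef
    have hsS : s ∈ S := ⟨x, hxcyl, rfl⟩
    have hsIco : s ∈ Set.Ico (0:ℝ) 1 := hSsub hsS
    have hscyl : s ∈ cylinder β η := by
      refine ⟨hsIco, fun j hj => ?_⟩
      have hj' : n + j < (w ++ η).length := by rw [hlen]; omega
      have h1 := hxd (n + j) hj'
      simp only [List.get_eq_getElem] at h1 ⊢
      rw [betaDigit_add] at h1
      rw [hsdef, ← h1]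
      have hwn : w.length ≤ n + j := by omega
      rw [List.getElem_append_right hwn]
      congr 1
      omega
    have htcyl : t ∈ cylinder β η :=
      ⟨⟨ht0, ht1⟩, fun j hj => by simp [hη, List.get_ofFn]⟩
    have h1 := T_iter_eq_of_mem hscyl
    have h2 := T_iter_eq_of_mem htcyl
    rw [hηlen] at h1 h2
    have h3 := betaT_iter_mem β s hsIco η.length
    have h4 := betaT_iter_mem β t ⟨ht0, ht1⟩ η.length
    rw [hηlen] at h3 h4
    have hbm : (0:ℝ) < β ^ m := pow_pos hβ0 m
    have hP : (1 / β) ^ m * β ^ m = 1 := by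
      rw [one_div, inv_pow, inv_mul_cancel₀ hbm.ne']
    have hst : t - (1 / β) ^ m < s := by
      have e1 : (0:ℝ) ≤ β ^ m * s - Cval β η := h1 ▸ h3.1
      have e2 : β ^ m * t - Cval β η < 1 := h2 ▸ h4.2
      nlinarith
    have hsu : s ≤ u := le_csSup hbdd hsS
    linarith
  refine ⟨?_, ?_⟩
  · rw [hA]
  · constructor
    · intro hf
      exact hB (hA.1 hf) 
    · intro hcat
      exact hfull_iff.2 (hB' hcat)
end

section
/- Let β belong to the set A₀ of bases for which the sequence (l_n(β)) of zero-run lengths in the β-expansion of 1 is bounded. Then there exists an integer M > 0 such that for every β-admissible word (ε_1,…,ε_n): (1) the word (ε_1,…,ε_n,0^M) can be followed by any β-admissible word to form a β-admissible word, and (2) β^{−(n+M)} ≤ |I_n(ε_1,…,ε_n)| ≤ β^{−n}. -/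
open Filter MeasureTheory Set

lemma betaT_eq_of_lt (β x : ℝ) (h0 : 0 ≤ β * x) (h1 : β * x < 1) : betaT β x = β * x := by
  have : ⌊β * x⌋ = 0 := Int.floor_eq_zero_iff.2 ⟨h0, h1⟩
  simp [betaT, this]

/-- Cylinder data: the _root_.cylinder of `w` is the interval `[s, s + γ/βⁿ)` and `T^n` maps it
affinely onto `[0, γ)`. -/
structure CylData (β : ℝ) (w : List ℤ) (s γ : ℝ) : Prop where
  γ_pos : 0 < γ
  γ_le : γ ≤ 1
  mem_iff : ∀ x, x ∈ _root_.cylinder β w ↔ ∃ t, 0 ≤ t ∧ t < γ ∧ x = s + t / β ^ w.length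
  map : ∀ t, 0 ≤ t → t < γ → (betaT β)^[w.length] (s + t / β ^ w.length) = t

lemma mem_cylinder_append_singleton {β x : ℝ} {w : List ℤ} {d : ℤ} :
    x ∈ _root_.cylinder β (w ++ [d]) ↔ x ∈ _root_.cylinder β w ∧ betaDigit β x w.length = d := by
  simp only [_root_.cylinder, Set.mem_setOf_eq, List.length_append, List.length_singleton,
    List.get_eq_getElem]
  constructor
  · rintro ⟨hx, h⟩
    refine ⟨⟨hx, fun i hi => ?_⟩, ?_⟩
    · have := h i (by omega)
      rwa [List.getElem_append_left hi] at this
    · have := h w.length (by omega)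
      rw [List.getElem_append_right (le_refl _)] at this
      simpa using this
  · rintro ⟨⟨hx, h⟩, hd⟩
    refine ⟨hx, fun i hi => ?_⟩
    rcases lt_or_ge i w.length with hlt | hge
    · rw [List.getElem_append_left hlt]; exact h i hlt
    · have hi' : i = w.length := by omega
      subst hi'
      rw [List.getElem_append_right (le_refl _)]
      simpa using hd

lemma CylData.nil {β : ℝ} (hβ : 1 < β) : CylData β [] 0 1 where
  γ_pos := one_pos
  γ_le := le_refl 1
  mem_iff := by
    intro x
    simp only [_root_.cylinder, Set.mem_setOf_eq, List.length_nil]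
    constructor
    · rintro ⟨⟨h0, h1⟩, -⟩
      exact ⟨x, h0, h1, by simp⟩
    · rintro ⟨t, h0, h1, rfl⟩
      exact ⟨⟨by simpa using h0, by simpa using h1⟩, fun i hi => absurd hi (by simp)⟩
  map := by intro t h0 h1; simp

lemma CylData.step {β s γ : ℝ} {w : List ℤ} (hβ : 1 < β) (h : CylData β w s γ)
    (d : ℤ) (hd0 : 0 ≤ d) (hd : (d : ℝ) < β * γ) :
    CylData β (w ++ [d]) (s + d / β ^ (w.length + 1)) (min (β * γ - d) 1) := by
  have hβ0 : (0:ℝ) < β := by linarith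
  have hpow : (0:ℝ) < β ^ w.length := pow_pos hβ0 _
  have hpow1 : (0:ℝ) < β ^ (w.length + 1) := pow_pos hβ0 _
  have hlen : (w ++ [d]).length = w.length + 1 := by simp
  constructor
  · exact lt_min (by linarith) one_pos
  · exact min_le_right _ _
  · intro x
    rw [mem_cylinder_append_singleton, h.mem_iff x]
    constructor
    · rintro ⟨⟨t, ht0, htγ, rfl⟩, hdig⟩
      have hT : (betaT β)^[w.length] (s + t / β ^ w.length) = t := h.map t ht0 htγ
      have hfl : ⌊β * t⌋ = d := by
        simpa [betaDigit, hT] using hdig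
      refine ⟨β * t - d, ?_, ?_, ?_⟩
      · have := Int.floor_le (β * t); rw [hfl] at this; linarith
      · refine lt_min ?_ ?_
        · have : β * t < β * γ := by nlinarith
          linarith
        · have := Int.lt_floor_add_one (β * t); rw [hfl] at this; linarith
      · rw [hlen]
        field_simp
        ring
    · rintro ⟨t', ht0, htγ, rfl⟩
      rw [hlen]
      have ht'1 : t' < 1 := lt_of_lt_of_le htγ (min_le_right _ _)
      have ht'γ : t' < β * γ - d := lt_of_lt_of_le htγ (min_le_left _ _)
      set t : ℝ := (d + t') / β with htdef
      have htx : s + ↑d / β ^ (w.length + 1) + t' / β ^ (w.length + 1)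
          = s + t / β ^ w.length := by
        rw [htdef]; field_simp; ring
      have ht0' : 0 ≤ t := by
        apply div_nonneg _ (le_of_lt hβ0)
        have : (0:ℝ) ≤ (d:ℝ) := Int.cast_nonneg hd0
        linarith
      have htγ' : t < γ := by
        rw [htdef, div_lt_iff₀ hβ0]
        linarith
      have hβt : β * t = d + t' := by rw [htdef]; field_simp
      have hfl : ⌊β * t⌋ = d := by
        rw [hβt]
        exact Int.floor_eq_iff.2 ⟨by linarith, by push_cast; linarith⟩
      refine ⟨⟨t, ht0', htγ', htx⟩, ?_⟩
      rw [htx]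
      simp only [betaDigit, h.map t ht0' htγ', hfl]
  · intro t' ht0 htγ
    rw [hlen]
    have ht'1 : t' < 1 := lt_of_lt_of_le htγ (min_le_right _ _)
    have ht'γ : t' < β * γ - d := lt_of_lt_of_le htγ (min_le_left _ _)
    set t : ℝ := (d + t') / β with htdef
    have ht0' : 0 ≤ t := by
      apply div_nonneg _ (le_of_lt hβ0)
      have : (0:ℝ) ≤ (d:ℝ) := Int.cast_nonneg hd0
      linarith
    have htγ' : t < γ := by rw [htdef, div_lt_iff₀ hβ0]; linarith
    have hβt : β * t = d + t' := by rw [htdef]; field_simp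
    have htx : s + ↑d / β ^ (w.length + 1) + t' / β ^ (w.length + 1)
        = s + t / β ^ w.length := by
      rw [htdef]; field_simp; ring
    rw [htx, Function.iterate_succ_apply', h.map t ht0' htγ']
    have hfl : ⌊β * t⌋ = d := by
      rw [hβt]
      exact Int.floor_eq_iff.2 ⟨by linarith, by push_cast; linarith⟩
    show β * t - ↑⌊β * t⌋ = t'
    rw [hfl, hβt]
    ring

lemma CylData.zeros {β s γ : ℝ} {w : List ℤ} (hβ : 1 < β) (h : CylData β w s γ) (k : ℕ) :
    CylData β (w ++ List.replicate k 0) s (min (β ^ k * γ) 1) := by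
  induction k with
  | zero =>
    simpa [min_eq_left h.γ_le] using h
  | succ k ih =>
    have hβ0 : (0:ℝ) < β := by linarith
    have hpos : (0:ℝ) < min (β ^ k * γ) 1 :=
      lt_min (mul_pos (pow_pos hβ0 _) h.γ_pos) one_pos
    have hstep := ih.step hβ 0 le_rfl (by simpa using mul_pos hβ0 hpos)
    have hlist : (w ++ List.replicate k 0) ++ [(0:ℤ)] = w ++ List.replicate (k+1) 0 := by
      rw [List.append_assoc, ← List.replicate_succ']
    have hmin : min (β * min (β ^ k * γ) 1 - ((0:ℤ):ℝ)) 1 = min (β ^ (k+1) * γ) 1 := by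
      push_cast
      rcases le_total (β ^ k * γ) 1 with hle | hge
      · rw [min_eq_left hle, pow_succ]
        ring_nf
      · rw [min_eq_right hge, mul_one, sub_zero, min_eq_right hβ.le,
          min_eq_right]
        rw [pow_succ]
        nlinarith [pow_pos hβ0 k]
    have hs : s + ((0:ℤ):ℝ) / β ^ ((w ++ List.replicate k 0).length + 1) = s := by simp
    rw [hlist, hmin, hs] at hstep
    exact hstep

lemma mem_cylinder_of_admissible {β : ℝ} {w : List ℤ} (h : IsAdmissibleWord β w) :
    ∃ x ∈ _root_.cylinder β w, True := by
  obtain ⟨x, hx, hw⟩ := h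
  exact ⟨x, ⟨hx, fun i hi => (hw i hi).symm⟩, trivial⟩

lemma exists_cylData {β : ℝ} (hβ : 1 < β) {w : List ℤ} (hw : IsAdmissibleWord β w) :
    ∃ s γ, (∃ j, γ = (betaT β)^[j] 1) ∧ CylData β w s γ := by
  induction w using List.reverseRecOn with
  | nil => exact ⟨0, 1, ⟨0, by simp⟩, CylData.nil hβ⟩
  | append_singleton u d ih =>
    have hβ0 : (0:ℝ) < β := by linarith
    have hu : IsAdmissibleWord β u := by
      obtain ⟨x, hx, h⟩ := hw
      refine ⟨x, hx, fun i hi => ?_⟩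
      have h2 := h i (by simp only [List.length_append, List.length_singleton]; omega)
      simp only [List.get_eq_getElem] at h2 ⊢
      rwa [List.getElem_append_left hi] at h2
    obtain ⟨s, γ, ⟨j, hγj⟩, hc⟩ := ih hu
    obtain ⟨x, hxc, -⟩ := mem_cylinder_of_admissible hw
    rw [mem_cylinder_append_singleton] at hxc
    obtain ⟨hxu, hdig⟩ := hxc
    rw [hc.mem_iff] at hxu
    obtain ⟨t, ht0, htγ, rfl⟩ := hxu
    have hT := hc.map t ht0 htγ
    have hfl : ⌊β * t⌋ = d := by simpa [betaDigit, hT] using hdig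
    have hd0 : 0 ≤ d := hfl ▸ Int.floor_nonneg.2 (mul_nonneg hβ0.le ht0)
    have hdlt : (d:ℝ) < β * γ := by
      have h1 := Int.floor_le (β * t); rw [hfl] at h1
      have h2 : β * t < β * γ := by nlinarith
      linarith
    refine ⟨_, _, ?_, hc.step hβ d hd0 hdlt⟩
    rcases le_or_gt 1 (β * γ - d) with hge | hlt
    · exact ⟨0, by simp [min_eq_right hge]⟩
    · refine ⟨j + 1, ?_⟩
      rw [min_eq_left hlt.le, Function.iterate_succ_apply', ← hγj]
      have hflγ : ⌊β * γ⌋ = d := Int.floor_eq_iff.2 ⟨hdlt.le, by push_cast; linarith⟩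
      show β * γ - ↑d = β * γ - ↑⌊β * γ⌋
      rw [hflγ]

lemma CylData.volume_eq {β s γ : ℝ} {w : List ℤ} (hβ : 1 < β) (h : CylData β w s γ) :
    MeasureTheory.volume (_root_.cylinder β w) = ENNReal.ofReal (γ / β ^ w.length) := by
  have hβ0 : (0:ℝ) < β := by linarith
  have hpow : (0:ℝ) < β ^ w.length := pow_pos hβ0 _
  have hset : _root_.cylinder β w = Set.Ico s (s + γ / β ^ w.length) := by
    ext x
    rw [h.mem_iff]
    constructor
    · rintro ⟨t, ht0, htγ, rfl⟩
      constructor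
      · have := div_nonneg ht0 hpow.le; linarith
      · have : t / β ^ w.length < γ / β ^ w.length := by gcongr
        linarith
    · rintro ⟨h1, h2⟩
      refine ⟨(x - s) * β ^ w.length, by nlinarith, ?_, by field_simp; ring⟩
      rw [← lt_div_iff₀ hpow]
      linarith
  rw [hset, Real.volume_Ico, add_sub_cancel_left]

lemma iterate_nonneg {β : ℝ} (j : ℕ) : 0 ≤ (betaT β)^[j] 1 := by
  cases j with
  | zero => simp
  | succ j => rw [Function.iterate_succ_apply']; exact (betaT_mem_Ico β _).1

lemma iterate_lt_one {β : ℝ} (j : ℕ) (hj : 1 ≤ j) : (betaT β)^[j] 1 < 1 := by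
  obtain ⟨i, rfl⟩ : ∃ i, j = i + 1 := ⟨j - 1, by omega⟩
  rw [Function.iterate_succ_apply']; exact (betaT_mem_Ico β _).2

lemma iterate_zero_succ {β : ℝ} (j : ℕ) (h : (betaT β)^[j] 1 = 0) :
    (betaT β)^[j+1] 1 = 0 := by
  rw [Function.iterate_succ_apply', h]
  simp [betaT]

lemma orbit_lb {β : ℝ} (hβA : β ∈ A0) :
    ∃ M : ℕ, 0 < M ∧ ∀ j : ℕ, (betaT β)^[j] 1 = 0 ∨ 1 / β ^ M ≤ (betaT β)^[j] 1 := by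
  obtain ⟨hβ, C, hC⟩ := hβA
  have hβ0 : (0:ℝ) < β := by linarith
  by_cases hfin : ∃ n, betaDigit β 1 n ≠ 0 ∧ ∀ i, n < i → betaDigit β 1 i = 0
  · -- finite expansion of 1
    obtain ⟨n, -, hzafter⟩ := hfin
    have hzero : (betaT β)^[n+1] 1 = 0 := by
      by_contra hne
      have hε0 : 0 < (betaT β)^[n+1] 1 := lt_of_le_of_ne (iterate_nonneg _) (Ne.symm hne)
      set ε := (betaT β)^[n+1] 1 with hεdef
      have key : ∀ k, (betaT β)^[n+1+k] 1 = β ^ k * ε := by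
        intro k
        induction k with
        | zero => rw [Nat.add_zero, pow_zero, one_mul]
        | succ k ih =>
          have hlt : (betaT β)^[n+1+k] 1 < 1 := iterate_lt_one _ (by omega)
          have hdig : betaDigit β 1 (n+1+k) = 0 := hzafter _ (by omega)
          have hfl : ⌊β * (betaT β)^[n+1+k] 1⌋ = 0 := hdig
          have hβx := Int.floor_eq_zero_iff.1 hfl
          have : (betaT β)^[n+1+(k+1)] 1 = betaT β ((betaT β)^[n+1+k] 1) := by
            rw [show n+1+(k+1) = (n+1+k)+1 by omega, Function.iterate_succ_apply']
          rw [this, betaT_eq_of_lt β _ hβx.1 hβx.2, ih, pow_succ]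
          ring
      obtain ⟨k, hk⟩ := pow_unbounded_of_one_lt (1/ε) hβ
      have h1 : (betaT β)^[n+1+k] 1 < 1 := iterate_lt_one _ (by omega)
      rw [key k] at h1
      have : 1/ε * ε < β ^ k * ε := by exact mul_lt_mul_of_pos_right hk hε0
      rw [one_div_mul_cancel (ne_of_gt hε0)] at this
      linarith
    have hzero' : ∀ j, n + 1 ≤ j → (betaT β)^[j] 1 = 0 := by
      intro j hj
      obtain ⟨k, rfl⟩ : ∃ k, j = (n+1) + k := ⟨j - (n+1), by omega⟩
      induction k with
      | zero => exact hzero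
      | succ k ih => exact iterate_zero_succ _ (ih (by omega))
    have hex : ∀ j : ℕ, ∃ m : ℕ, 0 < (betaT β)^[j] 1 → 1 / β ^ m ≤ (betaT β)^[j] 1 := by
      intro j
      by_cases hp : 0 < (betaT β)^[j] 1
      · obtain ⟨m, hm⟩ := pow_unbounded_of_one_lt (1 / (betaT β)^[j] 1) hβ
        refine ⟨m, fun _ => ?_⟩
        have h2 := (div_lt_iff₀ hp).1 hm
        rw [div_le_iff₀ (pow_pos hβ0 m)]
        nlinarith
      · exact ⟨0, fun h => absurd h hp⟩
    choose g hg using hex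
    refine ⟨1 + (Finset.range (n+1)).sup g, by omega, fun j => ?_⟩
    rcases le_or_gt j n with hj | hj
    · by_cases h0 : (betaT β)^[j] 1 = 0
      · exact Or.inl h0
      · right
        have hp : 0 < (betaT β)^[j] 1 := lt_of_le_of_ne (iterate_nonneg _) (Ne.symm h0)
        have h1 : g j ≤ (Finset.range (n+1)).sup g :=
          Finset.le_sup (f := g) (Finset.mem_range.2 (by omega))
        have hgj : g j ≤ 1 + (Finset.range (n+1)).sup g := by omega
        calc 1 / β ^ (1 + (Finset.range (n+1)).sup g) ≤ 1 / β ^ (g j) := by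
              apply one_div_le_one_div_of_le (pow_pos hβ0 _)
              exact pow_le_pow_right₀ hβ.le hgj
          _ ≤ (betaT β)^[j] 1 := hg j hp
    · exact Or.inl (hzero' j (by omega))
  · -- infinite expansion of 1
    have hstar : betaStar β = betaDigit β 1 := by
      rw [betaStar, dif_neg hfin]
    refine ⟨C + 1, by omega, fun j => ?_⟩
    rcases Nat.eq_zero_or_pos j with rfl | hj
    · right
      have h1 : (1:ℝ) ≤ β ^ (C+1) := one_le_pow₀ hβ.le
      rw [Function.iterate_zero_apply]
      exact (div_le_one (pow_pos hβ0 _)).2 h1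
    by_cases h0 : (betaT β)^[j] 1 = 0
    · exact Or.inl h0
    right
    by_contra hcon
    push_neg at hcon
    have hp : 0 < (betaT β)^[j] 1 := lt_of_le_of_ne (iterate_nonneg _) (Ne.symm h0)
    have hsmall : (betaT β)^[j] 1 < 1 / β ^ (C+1) := hcon
    have key : ∀ i, i ≤ C → (betaT β)^[j+i] 1 = β ^ i * (betaT β)^[j] 1 := by
      intro i hi
      induction i with
      | zero => simp
      | succ i ih =>
        have hih := ih (by omega)
        have hb : β * (betaT β)^[j+i] 1 < 1 := by
          rw [hih, ← mul_assoc, ← pow_succ']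
          rw [lt_div_iff₀ (pow_pos hβ0 (C+1))] at hsmall
          calc β ^ (i+1) * (betaT β)^[j] 1 ≤ β ^ (C+1) * (betaT β)^[j] 1 := by
                gcongr; exact hβ.le; omega
            _ < 1 := by linarith
        have hnn : 0 ≤ β * (betaT β)^[j+i] 1 :=
          mul_nonneg hβ0.le (iterate_nonneg _)
        rw [show j+(i+1) = (j+i)+1 by omega, Function.iterate_succ_apply',
          betaT_eq_of_lt β _ hnn hb, hih, pow_succ]
        ring
    have hdigz : ∀ i, i < C + 1 → betaStar β (j + i) = 0 := by
      intro i hi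
      rw [hstar]
      show ⌊β * (betaT β)^[j+i] 1⌋ = 0
      have hkey := key i (by omega)
      have hb : β * (betaT β)^[j+i] 1 < 1 := by
        rw [hkey, ← mul_assoc, ← pow_succ']
        rw [lt_div_iff₀ (pow_pos hβ0 (C+1))] at hsmall
        calc β ^ (i+1) * (betaT β)^[j] 1 ≤ β ^ (C+1) * (betaT β)^[j] 1 := by
              gcongr; exact hβ.le; omega
          _ < 1 := by linarith
      exact Int.floor_eq_zero_iff.2 ⟨mul_nonneg hβ0.le (iterate_nonneg _), hb⟩
    have hle : ((C+1 : ℕ) : ℕ∞) ≤ zeroRunLen β j := by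
      have : (C+1 : ℕ) ∈ {k : ℕ | ∀ i, i < k → betaStar β (j + i) = 0} := hdigz
      exact le_iSup₂ (f := fun (k : ℕ) (_ : k ∈ _) => (k : ℕ∞)) (C+1) this
    have := le_trans hle (hC j (by omega))
    rw [Nat.cast_le] at this
    omega


/-- For β ∈ A₀ there is M > 0 such that every admissible word followed by 0^M can be
concatenated with any admissible word, and every n-th order basic interval has length
between β^{-(n+M)} and β^{-n}. -/
theorem A0_uniform_full (β : ℝ) (hβ : β ∈ A0) :
    ∃ M : ℕ, 0 < M ∧ ∀ w : List ℤ, IsAdmissibleWord β w →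
      (∀ η : List ℤ, IsAdmissibleWord β η →
        IsAdmissibleWord β (w ++ List.replicate M 0 ++ η)) ∧
      ENNReal.ofReal (1 / β ^ (w.length + M)) ≤ volume (cylinder β w) ∧
      volume (cylinder β w) ≤ ENNReal.ofReal (1 / β ^ w.length) := by
  obtain ⟨M, hM0, hM⟩ := orbit_lb hβ
  obtain ⟨hβ1, -⟩ := hβ
  have hβ0 : (0:ℝ) < β := by linarith
  refine ⟨M, hM0, fun w hw => ?_⟩
  obtain ⟨s, γ, ⟨j, hγj⟩, hc⟩ := exists_cylData hβ1 hw
  have hγM : 1 / β ^ M ≤ γ := by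
    rcases hM j with h0 | h1
    · exfalso; have := hc.γ_pos; rw [hγj, h0] at this; exact lt_irrefl 0 this
    · rw [hγj]; exact h1
  have hfull0 := hc.zeros hβ1 M
  have hmin1 : min (β ^ M * γ) 1 = 1 := min_eq_right (by
    have h2 : β ^ M * (1/β^M) = 1 := by field_simp
    nlinarith [pow_pos hβ0 M])
  rw [hmin1] at hfull0
  set w' := w ++ List.replicate M 0 with hw'
  refine ⟨?_, ?_, ?_⟩
  · intro η hη
    obtain ⟨y, hy, hηy⟩ := hη
    set x := s + y / β ^ w'.length with hxdef
    have hxc : x ∈ _root_.cylinder β w' := (hfull0.mem_iff x).2 ⟨y, hy.1, hy.2, rfl⟩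
    have hTx : (betaT β)^[w'.length] x = y := hfull0.map y hy.1 hy.2
    refine ⟨x, hxc.1, fun i hi => ?_⟩
    simp only [List.get_eq_getElem] at hηy ⊢
    rcases lt_or_ge i w'.length with hlt | hge
    · rw [List.getElem_append_left hlt]
      exact (hxc.2 i hlt).symm
    · rw [List.getElem_append_right hge]
      obtain ⟨k, rfl⟩ : ∃ k, i = w'.length + k := ⟨i - w'.length, by omega⟩
      have hklen : k < η.length := by
        simp only [List.length_append] at hi; omega
      have hidx : w'.length + k - w'.length = k := by omega
      simp only [hidx]
      rw [hηy k hklen]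
      show betaDigit β y k = betaDigit β x (w'.length + k)
      unfold betaDigit
      rw [show w'.length + k = k + w'.length by omega, Function.iterate_add_apply, hTx]
  · rw [hc.volume_eq hβ1]
    apply ENNReal.ofReal_le_ofReal
    have heq : 1 / β ^ (w.length + M) = (1 / β ^ M) / β ^ w.length := by
      rw [pow_add]; field_simp
    rw [heq]
    gcongr
  · rw [hc.volume_eq hβ1]
    apply ENNReal.ofReal_le_ofReal
    have hpow : (0:ℝ) < β ^ w.length := pow_pos hβ0 _
    gcongr
    exact hc.γ_le
end
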